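/- For all θ₀, θ_R, θ₀', θ_R' ∈ S_{2π} and every z ∈ ρ(H_{θ₀,θ_R}), the determinant of the 2×2 boundary data map satisfies det_{ℂ²}(Λ_{θ₀,θ_R}^{θ₀',θ_R'}(z)) = Δ(z,R,θ₀',θ_R') / Δ(z,R,θ₀,θ_R). -/

import Mathlib

open MeasureTheory Filter
open scoped InnerProductSpace

noncomputable section
open scoped Classical


variable {H : Type*} [NormedAddCommGroup H] [InnerProductSpace ℂ H] [CompleteSpace H]

/-- `T` is the (bounded, everywhere defined) inverse of `A - z·I`. -/
def IsResolvent (A : H →ₗ.[ℂ] H) (z : ℂ) (T : H →L[ℂ] H) : Prop :=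
  (∀ x : H, ∃ hx : T x ∈ A.domain, A ⟨T x, hx⟩ - z • T x = x) ∧
  ∀ u : A.domain, T (A u - z • (u : H)) = (u : H)

/-- The resolvent set of an unbounded operator. -/
def resolventSetP (A : H →ₗ.[ℂ] H) : Set ℂ := {z | ∃ T, IsResolvent A z T}

/-- The spectrum of an unbounded operator. -/
def specP (A : H →ₗ.[ℂ] H) : Set ℂ := (resolventSetP A)ᶜ

/-- The resolvent `(A - z·I)⁻¹` (junk value `0` off the resolvent set). -/
def res (A : H →ₗ.[ℂ] H) (z : ℂ) : H →L[ℂ] H :=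
  if h : ∃ T, IsResolvent A z T then h.choose else 0

/-- The operator `A + t·I` (same domain). -/
def shiftP (A : H →ₗ.[ℂ] H) (t : ℂ) : H →ₗ.[ℂ] H :=
  ⟨A.domain, A.toFun + t • A.domain.subtype⟩

/-- `A` is of positive type: `(-∞,0] ⊆ ρ(A)` and `sup_{t ≥ 0} ‖(1+t)(A+t)⁻¹‖ < ∞`. -/
def IsPositiveTypeP (A : H →ₗ.[ℂ] H) : Prop :=
  (∀ x : ℝ, x ≤ 0 → (x : ℂ) ∈ resolventSetP A) ∧
  ∃ M : ℝ, ∀ t : ℝ, 0 ≤ t → (1 + t) * ‖res A (-(t : ℂ))‖ ≤ M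

/-- The open sector of half-opening angle `ω` about the positive reals
(`(0,∞)` for `ω = 0`). -/
def sectorS (ω : ℝ) : Set ℂ :=
  if ω = 0 then (fun x : ℝ => (x : ℂ)) '' Set.Ioi 0
  else {z : ℂ | z ≠ 0 ∧ |Complex.arg z| < ω}

/-- `A` is sectorial of angle `ω`. -/
def IsSectorialP (A : H →ₗ.[ℂ] H) (ω : ℝ) : Prop :=
  specP A ⊆ closure (sectorS ω) ∧
  ∀ ω' : ℝ, ω < ω' → ω' < Real.pi →
    ∃ M : ℝ, ∀ z ∈ (closure (sectorS ω'))ᶜ, ‖z‖ * ‖res A z‖ ≤ M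

/-- The shifted sector `-t₀ + S_ω`. -/
def shiftedSector (t0 ω : ℝ) : Set ℂ := (fun w => -(t0 : ℂ) + w) '' sectorS ω

/-- The region `ℂ \ closure (-t₀ + S_ω)`. -/
def offSector (t0 ω : ℝ) : Set ℂ := (closure (shiftedSector t0 ω))ᶜ

/-- The bounded operator `(A - z·I)^{-1/2}`, defined by the Balakrishnan-type formula
`(1/π) ∫₀^∞ t^{-1/2} (A + (t - z)·I)⁻¹ dt`. -/
def negSqrt (A : H →ₗ.[ℂ] H) (z : ℂ) : H →L[ℂ] H :=
  ((Real.pi : ℂ))⁻¹ • ∫ t in Set.Ioi (0 : ℝ), ((Real.sqrt t : ℂ))⁻¹ • res A (z - t)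

/-- Trace-class (nuclear) bounded operators, characterized by
`sup { ∑ |⟨eᵢ, T fᵢ⟩| : (eᵢ), (fᵢ) finite orthonormal families } < ∞`. -/
def IsTraceClass (T : H →L[ℂ] H) : Prop :=
  ∃ C : ℝ, ∀ (n : ℕ) (e f : Fin n → H), Orthonormal ℂ e → Orthonormal ℂ f →
    ∑ i, ‖⟪e i, T (f i)⟫_ℂ‖ ≤ C

/-- The trace norm `‖T‖₁`. -/
def traceNorm (T : H →L[ℂ] H) : ℝ :=
  sSup {s : ℝ | ∃ (n : ℕ) (e f : Fin n → H), Orthonormal ℂ e ∧ Orthonormal ℂ f ∧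
    s = ∑ i, ‖⟪e i, T (f i)⟫_ℂ‖}

/-- The trace of a (trace-class) operator, computed in the Hilbert basis `b`. -/
def traceH (b : HilbertBasis ℕ ℂ H) (T : H →L[ℂ] H) : ℂ :=
  ∑' n, ⟪(b n : H), T (b n)⟫_ℂ

/-- The Fredholm determinant `det (I + T)` (for `T` trace class), computed as the limit of
finite-section determinants along the Hilbert basis `b`. -/
def detI (b : HilbertBasis ℕ ℂ H) (T : H →L[ℂ] H) : ℂ :=
  limUnder atTop fun F : Finset ℕ =>
    Matrix.det (Matrix.of fun i j : F =>
      (if (i : ℕ) = (j : ℕ) then (1 : ℂ) else 0) + ⟪(b (i : ℕ) : H), T (b (j : ℕ))⟫_ℂ)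


/-! ### One-dimensional Schrödinger operators on `[0,R]` -/

/-- The underlying Hilbert space `L²((0,R); dx)`. -/
abbrev SchSp (Rr : ℝ) :=
  MeasureTheory.Lp ℂ 2 (MeasureTheory.volume.restrict (Set.Ioo (0 : ℝ) Rr))

/-- `u` (with derivative `du`) solves `-u'' + V u = z u` on `[0,R]`, with
`u, u' ∈ AC([0,R])` (the second derivative being encoded in integrated form). -/
def SolODE (Rr : ℝ) (V : ℝ → ℂ) (z : ℂ) (u du : ℝ → ℂ) : Prop :=
  (∀ x ∈ Set.Icc (0 : ℝ) Rr, HasDerivWithinAt u (du x) (Set.Icc (0 : ℝ) Rr) x) ∧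
  ∀ x ∈ Set.Icc (0 : ℝ) Rr, du x = du 0 + ∫ t in (0 : ℝ)..x, (V t - z) * u t

/-- The boundary trace `γ_{θ₀,θ_R}(u) = (cos θ₀ u(0) + sin θ₀ u'(0),
cos θ_R u(R) - sin θ_R u'(R))`. -/
def bdryC (Rr : ℝ) (t0 tR : ℂ) (u du : ℝ → ℂ) : Fin 2 → ℂ :=
  ![Complex.cos t0 * u 0 + Complex.sin t0 * du 0,
    Complex.cos tR * u Rr - Complex.sin tR * du Rr]

/-- `g` (with derivative `dg`) is an absolutely continuous representative of `f ∈ L²`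
satisfying `-g'' + V g - z g = h` (in integrated form, with `h₀` a representative of
`h ∈ L²`); i.e. `f` represents `(H - z)⁻¹ h`. -/
def SolvesAt (Rr : ℝ) (V : ℝ → ℂ) (z : ℂ) (f h : SchSp Rr) (g dg : ℝ → ℂ) : Prop :=
  (∀ᵐ x ∂(MeasureTheory.volume.restrict (Set.Ioo (0 : ℝ) Rr)), f x = g x) ∧
  (∀ x ∈ Set.Icc (0 : ℝ) Rr, HasDerivWithinAt g (dg x) (Set.Icc (0 : ℝ) Rr) x) ∧
  ∃ h0 : ℝ → ℂ,
    (∀ᵐ x ∂(MeasureTheory.volume.restrict (Set.Ioo (0 : ℝ) Rr)), h x = h0 x) ∧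
    ∀ x ∈ Set.Icc (0 : ℝ) Rr,
      dg x = dg 0 + ∫ t in (0 : ℝ)..x, (V t * g t - z * g t - h0 t)

/-- `Hop` is the Schrödinger operator `H_{θ₀,θ_R} = -d²/dx² + V` in `L²((0,R); dx)` with
separated boundary conditions `γ_{θ₀,θ_R}(g) = 0`, characterized through its graph. -/
def IsSchrodingerOp (Rr : ℝ) (V : ℝ → ℂ) (t0 tR : ℂ)
    (Hop : SchSp Rr →ₗ.[ℂ] SchSp Rr) : Prop :=
  ∀ f h : SchSp Rr, (f, h) ∈ Hop.graph ↔
    ∃ g dg : ℝ → ℂ, SolvesAt Rr V 0 f h g dg ∧ bdryC Rr t0 tR g dg = 0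

/-- `Λ` is the boundary data map `Λ_{θ₀,θ_R}^{θ₀',θ_R'}(z)`: for every solution `u` of
`-u'' + Vu = zu`, `Λ` maps `γ_{θ₀,θ_R}(u)` to `γ_{θ₀',θ_R'}(u)`. -/
def IsBoundaryDataMap (Rr : ℝ) (V : ℝ → ℂ) (t0 tR t0' tR' : ℂ) (z : ℂ)
    (Λ : Matrix (Fin 2) (Fin 2) ℂ) : Prop :=
  ∀ u du : ℝ → ℂ, SolODE Rr V z u du →
    Λ.mulVec (bdryC Rr t0 tR u du) = bdryC Rr t0' tR' u du

/-- `G` is the map `γ_{θ₀',θ_R'} ∘ (Hop - z)⁻¹ : L²((0,R)) → ℂ²`. -/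
def IsBdryResolventMap (Rr : ℝ) (V : ℝ → ℂ) (t0' tR' : ℂ) (z : ℂ)
    (Hop : SchSp Rr →ₗ.[ℂ] SchSp Rr)
    (G : SchSp Rr →L[ℂ] EuclideanSpace ℂ (Fin 2)) : Prop :=
  ∀ (h : SchSp Rr) (g dg : ℝ → ℂ), SolvesAt Rr V z (res Hop z h) h g dg →
    ∀ i : Fin 2, G h i = bdryC Rr t0' tR' g dg i

/-- The region `ℂ \ [c, ∞)`. -/
def offCut (c : ℝ) : Set ℂ := {z : ℂ | z.im ≠ 0 ∨ z.re < c}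

/-- `N` is the family `z ↦ (Hop - z)^{-1/2}`, defined via the spectral theorem with branch
cut along `[c, ∞)` (`c = inf σ(Hop)`): analytic on `ℂ \ [c,∞)`, squaring to the resolvent,
and positive (self-adjoint) for real `z < c`. -/
def IsSqrtResFam (Rr : ℝ) (Hop : SchSp Rr →ₗ.[ℂ] SchSp Rr) (c : ℝ)
    (N : ℂ → (SchSp Rr →L[ℂ] SchSp Rr)) : Prop :=
  (∀ z ∈ offCut c, (N z).comp (N z) = res Hop z) ∧
  (∀ x : ℝ, x < c →
    (∀ v w : SchSp Rr, ⟪N (x : ℂ) v, w⟫_ℂ = ⟪v, N (x : ℂ) w⟫_ℂ) ∧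
    ∀ v : SchSp Rr, 0 ≤ (⟪v, N (x : ℂ) v⟫_ℂ).re) ∧
  DifferentiableOn ℂ N (offCut c)

/-- The infimum `e₀ = inf(σ(Hop) ∪ σ(Hop'))`. -/
def einf (Rr : ℝ) (Hop Hop' : SchSp Rr →ₗ.[ℂ] SchSp Rr) : ℝ :=
  sInf {x : ℝ | (x : ℂ) ∈ specP Hop ∪ specP Hop'}

/-- The infimum of the spectrum of a single operator. -/
def einf1 (Rr : ℝ) (Hop : SchSp Rr →ₗ.[ℂ] SchSp Rr) : ℝ :=
  sInf {x : ℝ | (x : ℂ) ∈ specP Hop}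


/-- The characteristic determinant `Δ(z,R,θ₀,θ_R)` expressed through the values at `R`
of the fundamental system `θ, φ`. -/
def DeltaW (t0 tR thR dthR phR dphR : ℂ) : ℂ :=
  Complex.cos t0 * Complex.cos tR * phR - Complex.cos t0 * Complex.sin tR * dphR -
    Complex.sin t0 * Complex.cos tR * thR + Complex.sin t0 * Complex.sin tR * dthR

/-! Let `M_{θ₀,θ_R}` be the matrix with columns `γ_{θ₀,θ_R}(θ)` and `γ_{θ₀,θ_R}(φ)`. Its determinant
is `Δ(z,R,θ₀,θ_R)`, and `Λ M_{θ₀,θ_R} = M_{θ₀',θ_R'}` column by column, so `det Λ · Δ = Δ'`.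
Moreover `Δ ≠ 0`: a kernel vector `(a,b)` of `M_{θ₀,θ_R}` gives a solution `aθ + bφ` satisfying the
boundary condition of `H_{θ₀,θ_R}`, i.e. an eigenfunction for `z ∈ ρ(H_{θ₀,θ_R})`, so it vanishes
and `a = b = 0` by the initial conditions of `θ, φ`. -/

theorem eq_zero_of_mem_graph_of_mem_resolventSetP {E : Type*} [NormedAddCommGroup E]
    [InnerProductSpace ℂ E] {A : E →ₗ.[ℂ] E} {z : ℂ} (hz : z ∈ resolventSetP A) {f : E}
    (hf : (f, z • f) ∈ A.graph) : f = 0 := by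
  obtain ⟨y, rfl, hy⟩ := A.mem_graph_iff.mp hf
  obtain ⟨T, -, hT⟩ := hz
  simpa [hy] using (hT y).symm

theorem bdryC_linear_comb (Rr : ℝ) (t0 tR a b : ℂ) (u1 du1 u2 du2 : ℝ → ℂ) :
    bdryC Rr t0 tR (fun x => a * u1 x + b * u2 x) (fun x => a * du1 x + b * du2 x) =
      a • bdryC Rr t0 tR u1 du1 + b • bdryC Rr t0 tR u2 du2 := by
  funext i
  fin_cases i <;> simp [bdryC] <;> ring

def bdryMatrix (Rr : ℝ) (t0 tR : ℂ) (u1 du1 u2 du2 : ℝ → ℂ) : Matrix (Fin 2) (Fin 2) ℂ :=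
  Matrix.of fun i => ![bdryC Rr t0 tR u1 du1 i, bdryC Rr t0 tR u2 du2 i]

theorem bdryMatrix_mulVec (Rr : ℝ) (t0 tR : ℂ) (u1 du1 u2 du2 : ℝ → ℂ) (v : Fin 2 → ℂ) :
    (bdryMatrix Rr t0 tR u1 du1 u2 du2).mulVec v =
      bdryC Rr t0 tR (fun x => v 0 * u1 x + v 1 * u2 x) (fun x => v 0 * du1 x + v 1 * du2 x) := by
  rw [bdryC_linear_comb]
  funext i
  simp [bdryMatrix, Matrix.mulVec, dotProduct, Fin.sum_univ_two, mul_comm]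

theorem det_bdryMatrix_eq_DeltaW {Rr : ℝ} (t0 tR : ℂ) {th dth ph dph : ℝ → ℂ}
    (hth0 : th 0 = 1) (hdth0 : dth 0 = 0) (hph0 : ph 0 = 0) (hdph0 : dph 0 = 1) :
    (bdryMatrix Rr t0 tR th dth ph dph).det = DeltaW t0 tR (th Rr) (dth Rr) (ph Rr) (dph Rr) := by
  simp [Matrix.det_fin_two, bdryMatrix, bdryC, DeltaW, hth0, hdth0, hph0, hdph0]
  ring

namespace SolODE

variable {Rr : ℝ} {V : ℝ → ℂ} {z : ℂ} {u du : ℝ → ℂ}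

theorem continuousOn (hu : SolODE Rr V z u du) : ContinuousOn u (Set.Icc 0 Rr) :=
  fun x hx => (hu.1 x hx).continuousWithinAt

theorem intervalIntegrable (hV : IntegrableOn V (Set.Ioo 0 Rr)) (hu : SolODE Rr V z u du)
    {x : ℝ} (hx : x ∈ Set.Icc 0 Rr) : IntervalIntegrable (fun t => (V t - z) * u t) volume 0 x := by
  have hVz : IntegrableOn (fun t => V t - z) (Set.Icc 0 Rr) :=
    (hV.congr_set_ae Ioo_ae_eq_Icc.symm).sub (integrableOn_const measure_Icc_lt_top.ne)
  refine ((hVz.mul_continuousOn hu.continuousOn isCompact_Icc).mono_set ?_).intervalIntegrable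
  rw [Set.uIcc_of_le hx.1]
  exact Set.Icc_subset_Icc le_rfl hx.2

theorem linear_comb (hV : IntegrableOn V (Set.Ioo 0 Rr)) {u1 du1 u2 du2 : ℝ → ℂ}
    (h1 : SolODE Rr V z u1 du1) (h2 : SolODE Rr V z u2 du2) (a b : ℂ) :
    SolODE Rr V z (fun x => a * u1 x + b * u2 x) (fun x => a * du1 x + b * du2 x) := by
  refine ⟨fun x hx => ((h1.1 x hx).const_mul a).add ((h2.1 x hx).const_mul b), fun x hx => ?_⟩
  have hint : (∫ t in (0 : ℝ)..x, (V t - z) * (a * u1 t + b * u2 t)) =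
      a * (∫ t in (0 : ℝ)..x, (V t - z) * u1 t) + b * ∫ t in (0 : ℝ)..x, (V t - z) * u2 t := by
    rw [← intervalIntegral.integral_const_mul, ← intervalIntegral.integral_const_mul,
      ← intervalIntegral.integral_add ((h1.intervalIntegrable hV hx).const_mul a)
        ((h2.intervalIntegrable hV hx).const_mul b)]
    exact intervalIntegral.integral_congr fun t _ => by ring
  simp only [hint, h1.2 x hx, h2.2 x hx]
  ring

theorem memLp (hu : SolODE Rr V z u du) : MemLp u 2 (volume.restrict (Set.Ioo 0 Rr)) := by
  have : IsFiniteMeasure (volume.restrict (Set.Ioo 0 Rr)) :=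
    isFiniteMeasure_restrict.2 measure_Ioo_lt_top.ne
  obtain ⟨C, hC⟩ := isCompact_Icc.exists_bound_of_continuousOn hu.continuousOn
  exact MemLp.of_bound
    ((hu.continuousOn.mono Set.Ioo_subset_Icc_self).aestronglyMeasurable measurableSet_Ioo) C
    (ae_restrict_of_forall_mem measurableSet_Ioo fun t ht => hC t (Set.Ioo_subset_Icc_self ht))

theorem mem_graph {t0 tR : ℂ} {Hop : SchSp Rr →ₗ.[ℂ] SchSp Rr}
    (hHop : IsSchrodingerOp Rr V t0 tR Hop) (hu : SolODE Rr V z u du)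
    (hb : bdryC Rr t0 tR u du = 0) : (hu.memLp.toLp u, z • hu.memLp.toLp u) ∈ Hop.graph := by
  have hfu := hu.memLp.coeFn_toLp
  refine (hHop _ _).2 ⟨u, du, ⟨hfu, hu.1, fun t => z * u t, ?_, fun x hx => ?_⟩, hb⟩
  · filter_upwards [Lp.coeFn_smul z (hu.memLp.toLp u), hfu] with t hsmul hut
    rw [hsmul, Pi.smul_apply, hut, smul_eq_mul]
  · rw [hu.2 x hx]
    congr 1
    exact intervalIntegral.integral_congr fun t _ => by ring

theorem eqOn_zero_of_bdryC_eq_zero (hR : 0 < Rr) {t0 tR : ℂ} {Hop : SchSp Rr →ₗ.[ℂ] SchSp Rr}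
    (hHop : IsSchrodingerOp Rr V t0 tR Hop) (hz : z ∈ resolventSetP Hop)
    (hu : SolODE Rr V z u du) (hb : bdryC Rr t0 tR u du = 0) : Set.EqOn u 0 (Set.Icc 0 Rr) := by
  have hf0 := eq_zero_of_mem_graph_of_mem_resolventSetP hz (hu.mem_graph hHop hb)
  have hae : u =ᵐ[volume.restrict (Set.Icc 0 Rr)] 0 := by
    rw [← Measure.restrict_congr_set Ioo_ae_eq_Icc]
    filter_upwards [hu.memLp.coeFn_toLp, Lp.coeFn_zero ℂ 2 (volume.restrict (Set.Ioo 0 Rr))]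
      with t hut hzero
    rw [← hut, hf0, hzero]
  exact volume.eqOn_Icc_of_ae_eq hR.ne hae hu.continuousOn continuousOn_const

theorem initial_eq_zero_of_bdryC_eq_zero (hR : 0 < Rr) {t0 tR : ℂ}
    {Hop : SchSp Rr →ₗ.[ℂ] SchSp Rr} (hHop : IsSchrodingerOp Rr V t0 tR Hop)
    (hz : z ∈ resolventSetP Hop) (hu : SolODE Rr V z u du) (hb : bdryC Rr t0 tR u du = 0) :
    u 0 = 0 ∧ du 0 = 0 := by
  have hzero := hu.eqOn_zero_of_bdryC_eq_zero hR hHop hz hb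
  have h0 : (0 : ℝ) ∈ Set.Icc 0 Rr := ⟨le_rfl, hR.le⟩
  refine ⟨hzero h0, (uniqueDiffOn_Icc hR 0 h0).eq_deriv _ (hu.1 0 h0) ?_⟩
  exact (hasDerivWithinAt_const 0 _ (0 : ℂ)).congr hzero (hzero h0)

end SolODE

theorem det_bdryMatrix_ne_zero {Rr : ℝ} (hR : 0 < Rr) {V : ℝ → ℂ}
    (hV : IntegrableOn V (Set.Ioo 0 Rr)) {t0 tR : ℂ} {Hop : SchSp Rr →ₗ.[ℂ] SchSp Rr}
    (hHop : IsSchrodingerOp Rr V t0 tR Hop) {z : ℂ} (hz : z ∈ resolventSetP Hop)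
    {th dth ph dph : ℝ → ℂ} (hth : SolODE Rr V z th dth) (hph : SolODE Rr V z ph dph)
    (hth0 : th 0 = 1) (hdth0 : dth 0 = 0) (hph0 : ph 0 = 0) (hdph0 : dph 0 = 1) :
    (bdryMatrix Rr t0 tR th dth ph dph).det ≠ 0 := by
  intro hdet
  obtain ⟨v, hv, hMv⟩ := Matrix.exists_mulVec_eq_zero_iff.mpr hdet
  rw [bdryMatrix_mulVec] at hMv
  obtain ⟨hv0, hv1⟩ :=
    (hth.linear_comb hV hph (v 0) (v 1)).initial_eq_zero_of_bdryC_eq_zero hR hHop hz hMv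
  simp only [hth0, hph0, hdth0, hdph0, mul_one, mul_zero, add_zero, zero_add] at hv0 hv1
  exact hv (funext fun i => by fin_cases i <;> assumption)

theorem IsBoundaryDataMap.mul_bdryMatrix {Rr : ℝ} {V : ℝ → ℂ} {t0 tR t0' tR' z : ℂ}
    {Λ : Matrix (Fin 2) (Fin 2) ℂ} (hΛ : IsBoundaryDataMap Rr V t0 tR t0' tR' z Λ)
    {u1 du1 u2 du2 : ℝ → ℂ} (h1 : SolODE Rr V z u1 du1) (h2 : SolODE Rr V z u2 du2) :
    Λ * bdryMatrix Rr t0 tR u1 du1 u2 du2 = bdryMatrix Rr t0' tR' u1 du1 u2 du2 := by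
  ext i j
  fin_cases j
  · simpa [bdryMatrix, Matrix.mul_apply', Matrix.mulVec] using congrFun (hΛ u1 du1 h1) i
  · simpa [bdryMatrix, Matrix.mul_apply', Matrix.mulVec] using congrFun (hΛ u2 du2 h2) i

theorem statement9_general
    (Rr : ℝ) (hR : 0 < Rr) (V : ℝ → ℂ)
    (hV : MeasureTheory.IntegrableOn V (Set.Ioo 0 Rr) MeasureTheory.volume)
    (t0 tR t0' tR' : ℂ)
    (Hop : SchSp Rr →ₗ.[ℂ] SchSp Rr) (hHop : IsSchrodingerOp Rr V t0 tR Hop)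
    (z : ℂ) (hz : z ∈ resolventSetP Hop)
    (Λ : Matrix (Fin 2) (Fin 2) ℂ) (hΛ : IsBoundaryDataMap Rr V t0 tR t0' tR' z Λ)
    (th dth ph dph : ℝ → ℂ)
    (hth : SolODE Rr V z th dth) (hph : SolODE Rr V z ph dph)
    (hth0 : th 0 = 1) (hdth0 : dth 0 = 0) (hph0 : ph 0 = 0) (hdph0 : dph 0 = 1) :
    Λ.det =
      DeltaW t0' tR' (th Rr) (dth Rr) (ph Rr) (dph Rr) /
        DeltaW t0 tR (th Rr) (dth Rr) (ph Rr) (dph Rr) := by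
  have hdet := congrArg Matrix.det (hΛ.mul_bdryMatrix hth hph)
  have hne := det_bdryMatrix_ne_zero hR hV hHop hz hth hph hth0 hdth0 hph0 hdph0
  rw [Matrix.det_mul] at hdet
  rw [det_bdryMatrix_eq_DeltaW t0 tR hth0 hdth0 hph0 hdph0] at hdet hne
  rw [det_bdryMatrix_eq_DeltaW t0' tR' hth0 hdth0 hph0 hdph0] at hdet
  exact eq_div_of_mul_eq hne hdet

/-- Lemma 2.8: `det Λ_{θ₀,θ_R}^{θ₀',θ_R'}(z) =
Δ(z,R,θ₀',θ_R') / Δ(z,R,θ₀,θ_R)` for `z ∈ ρ(H_{θ₀,θ_R})`. -/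
theorem statement9
    (Rr : ℝ) (hR : 0 < Rr) (V : ℝ → ℂ)
    (hV : MeasureTheory.IntegrableOn V (Set.Ioo 0 Rr) MeasureTheory.volume)
    (t0 tR t0' tR' : ℂ)
    (ht0 : 0 ≤ t0.re ∧ t0.re < 2 * Real.pi) (htR : 0 ≤ tR.re ∧ tR.re < 2 * Real.pi)
    (ht0' : 0 ≤ t0'.re ∧ t0'.re < 2 * Real.pi) (htR' : 0 ≤ tR'.re ∧ tR'.re < 2 * Real.pi)
    (Hop : SchSp Rr →ₗ.[ℂ] SchSp Rr) (hHop : IsSchrodingerOp Rr V t0 tR Hop)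
    (z : ℂ) (hz : z ∈ resolventSetP Hop)
    (Λ : Matrix (Fin 2) (Fin 2) ℂ) (hΛ : IsBoundaryDataMap Rr V t0 tR t0' tR' z Λ)
    (th dth ph dph : ℝ → ℂ)
    (hth : SolODE Rr V z th dth) (hph : SolODE Rr V z ph dph)
    (hth0 : th 0 = 1) (hdth0 : dth 0 = 0) (hph0 : ph 0 = 0) (hdph0 : dph 0 = 1) :
    Λ.det =
      DeltaW t0' tR' (th Rr) (dth Rr) (ph Rr) (dph Rr) /
        DeltaW t0 tR (th Rr) (dth Rr) (ph Rr) (dph Rr) :=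
  statement9_general Rr hR V hV t0 tR t0' tR' Hop hHop z hz Λ hΛ th dth ph dph hth hph hth0 hdth0
    hph0 hdph0

end
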